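/- arXiv:2512.03113 — 2 statements merged into one kernel-verified Lean document; each statement's English description precedes it below -/
import Mathlib

section
/- Discrete maximum principle for the implicit scheme without sources: if V_i φ_i c_i (P_i^{n+1} − P_i^n)/Δt = Σ_j T_{ij}(P_j^{n+1} − P_i^{n+1}) with all T_{ij} ≥ 0 and V_i φ_i c_i > 0, then max_i P_i^{n+1} ≤ max_i P_i^n. -/
theorem fvm_discrete_max_principle {I : Type*} [Fintype I] [Nonempty I]
    (V φ c : I → ℝ) (hpos : ∀ i, 0 < V i * φ i * c i)
    (Δt : ℝ) (hΔt : 0 < Δt)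
    (T : I → I → ℝ) (hTnonneg : ∀ i j, 0 ≤ T i j)
    (hTsymm : ∀ i j, T i j = T j i) (hTdiag : ∀ i, T i i = 0)
    (P0 P1 : I → ℝ)
    (hscheme : ∀ i, V i * φ i * c i * (P1 i - P0 i) / Δt =
      ∑ j, T i j * (P1 j - P1 i)) :
    Finset.univ.sup' Finset.univ_nonempty P1 ≤
      Finset.univ.sup' Finset.univ_nonempty P0 := by
  obtain ⟨i0, -, hi0⟩ := Finset.exists_mem_eq_sup' Finset.univ_nonempty P1
  rw [hi0]
  have hmax : ∀ j, P1 j ≤ P1 i0 := by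
    intro j
    rw [← hi0]
    exact Finset.le_sup' _ (Finset.mem_univ j)
  have hrhs : (∑ j, T i0 j * (P1 j - P1 i0)) ≤ 0 := by
    apply Finset.sum_nonpos
    intro j _
    exact mul_nonpos_of_nonneg_of_nonpos (hTnonneg i0 j) (by linarith [hmax j])
  have h := hscheme i0
  have hle : P1 i0 ≤ P0 i0 := by
    have h2 : V i0 * φ i0 * c i0 * (P1 i0 - P0 i0) / Δt ≤ 0 := h ▸ hrhs
    have h3 : V i0 * φ i0 * c i0 * (P1 i0 - P0 i0) ≤ 0 := by
      by_contra hc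
      push_neg at hc
      exact absurd h2 (not_le.mpr (div_pos hc hΔt))
    nlinarith [hpos i0]
  exact hle.trans (Finset.le_sup' _ (Finset.mem_univ i0))
end

section
/- In systematic resampling, the number of copies of particle j is always either ⌊n w_j⌋ or ⌈n w_j⌉ (deterministic bound on resampling variability). -/
set_option maxHeartbeats 1000000 in
theorem systematic_resampling_count_bounds (N n : ℕ) (hn : 0 < n)
    (c : ℕ → ℝ) (h0 : c 0 = 0) (hN : c N = 1)
    (hmono : ∀ k, c k ≤ c (k + 1))
    (j : ℕ) (hj1 : 1 ≤ j) (hjN : j ≤ N)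
    (u1 : ℝ) (hu : u1 ∈ Set.Ioo (0 : ℝ) (1 / n)) :
    ⌊(n : ℝ) * (c j - c (j - 1))⌋ ≤
      ((((Finset.Icc 1 n).filter (fun (i : ℕ) =>
        c (j - 1) < u1 + ((i : ℝ) - 1) / n ∧ u1 + ((i : ℝ) - 1) / n ≤ c j)).card : ℤ)) ∧
    ((((Finset.Icc 1 n).filter (fun (i : ℕ) =>
        c (j - 1) < u1 + ((i : ℝ) - 1) / n ∧ u1 + ((i : ℝ) - 1) / n ≤ c j)).card : ℤ))
      ≤ ⌈(n : ℝ) * (c j - c (j - 1))⌉ := by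
  obtain ⟨hu1pos, hu1lt⟩ := hu
  have hnpos : (0:ℝ) < n := by exact_mod_cast hn
  have hnu1 : (n:ℝ) * u1 < 1 := by
    rw [lt_div_iff₀ hnpos] at hu1lt; linarith [hu1lt]
  have hmono' : Monotone c := monotone_nat_of_le_succ hmono
  have ha0 : 0 ≤ c (j-1) := by
    have := hmono' (Nat.zero_le (j-1)); linarith [this, h0.symm.le]
  have hb1 : c j ≤ 1 := by
    have := hmono' hjN; linarith [this]
  have hab : c (j-1) ≤ c j := hmono' (Nat.sub_le j 1)
  set a := c (j-1) with ha
  set b := c j with hb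
  set A : ℝ := n*a - n*u1 + 1 with hA
  set B : ℝ := n*b - n*u1 + 1 with hB
  have hApos : 0 < A := by nlinarith
  have hBlt : B < n + 1 := by nlinarith
  have hAB : A ≤ B := by nlinarith
  have hfA0 : 0 ≤ ⌊A⌋ := Int.floor_nonneg.mpr hApos.le
  have hfBn : ⌊B⌋ ≤ (n:ℤ) := by
    by_contra h
    push_neg at h
    have h2 : ((n:ℤ)+1 : ℤ) ≤ ⌊B⌋ := h
    have h3 := Int.le_floor.mp h2
    push_cast at h3
    linarith
  set f := ⌊A⌋.toNat with hf
  set g := ⌊B⌋.toNat with hg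
  have hfcast : (f:ℤ) = ⌊A⌋ := Int.toNat_of_nonneg hfA0
  have hgcast : (g:ℤ) = ⌊B⌋ := Int.toNat_of_nonneg (le_trans hfA0 (Int.floor_le_floor hAB))
  have hfg : f ≤ g := by
    have := Int.floor_le_floor hAB
    omega
  have hgn : g ≤ n := by omega
  -- key equivalences
  have key1 : ∀ i : ℕ, (a < u1 + ((i:ℝ) - 1) / n ↔ A < i) := by
    intro i
    have hdiv : ((i:ℝ)-1)/n * n = (i:ℝ)-1 := div_mul_cancel₀ _ (ne_of_gt hnpos)
    constructor
    · intro h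
      have := mul_lt_mul_of_pos_right h hnpos
      nlinarith
    · intro h
      have h2 : A * (1/n) < i * (1/n) := by
        apply mul_lt_mul_of_pos_right h
        positivity
      have hinv : (n:ℝ) * (1/n) = 1 := by field_simp
      nlinarith
  have key2 : ∀ i : ℕ, (u1 + ((i:ℝ) - 1) / n ≤ b ↔ (i:ℝ) ≤ B) := by
    intro i
    have hdiv : ((i:ℝ)-1)/n * n = (i:ℝ)-1 := div_mul_cancel₀ _ (ne_of_gt hnpos)
    constructor
    · intro h
      have := mul_le_mul_of_nonneg_right h hnpos.le
      nlinarith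
    · intro h
      have h2 : (i:ℝ) * (1/n) ≤ B * (1/n) := by
        apply mul_le_mul_of_nonneg_right h
        positivity
      have hinv : (n:ℝ) * (1/n) = 1 := by field_simp
      nlinarith
  have hfilter : (Finset.Icc 1 n).filter (fun (i : ℕ) =>
      a < u1 + ((i : ℝ) - 1) / n ∧ u1 + ((i : ℝ) - 1) / n ≤ b) = Finset.Icc (f+1) g := by
    ext i
    simp only [Finset.mem_filter, Finset.mem_Icc]
    constructor
    · rintro ⟨⟨h1, h2⟩, h3, h4⟩
      have hAi : A < i := (key1 i).mp h3
      have hBi : (i:ℝ) ≤ B := (key2 i).mp h4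
      have h5 : ⌊A⌋ < (i:ℤ) := Int.floor_lt.mpr (by exact_mod_cast hAi)
      have h6 : (i:ℤ) ≤ ⌊B⌋ := Int.le_floor.mpr (by exact_mod_cast hBi)
      omega
    · rintro ⟨h1, h2⟩
      have h5 : ⌊A⌋ < (i:ℤ) := by omega
      have h6 : (i:ℤ) ≤ ⌊B⌋ := by omega
      have hAi : A < i := by
        have := Int.floor_lt.mp h5
        exact_mod_cast this
      have hBi : (i:ℝ) ≤ B := by
        have := Int.le_floor.mp h6
        exact_mod_cast this
      refine ⟨⟨by omega, by omega⟩, (key1 i).mpr hAi, (key2 i).mpr hBi⟩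
  have hcard : ((((Finset.Icc 1 n).filter (fun (i : ℕ) =>
      a < u1 + ((i : ℝ) - 1) / n ∧ u1 + ((i : ℝ) - 1) / n ≤ b)).card : ℤ)) = ⌊B⌋ - ⌊A⌋ := by
    rw [hfilter, Nat.card_Icc]
    omega
  have hBA : B - A = (n:ℝ) * (b - a) := by ring
  constructor
  · rw [hcard]
    have h1 : (⌊A⌋ : ℝ) + (⌊(n:ℝ)*(b-a)⌋ : ℝ) ≤ B := by
      have := Int.floor_le A
      have := Int.floor_le ((n:ℝ)*(b-a))
      linarith
    have h2 : ⌊A⌋ + ⌊(n:ℝ)*(b-a)⌋ ≤ ⌊B⌋ := Int.le_floor.mpr (by exact_mod_cast h1)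
    omega
  · rw [hcard]
    have h1 : (⌊B⌋ : ℝ) < (⌈(n:ℝ)*(b-a)⌉ : ℝ) + (⌊A⌋ : ℝ) + 1 := by
      have := Int.floor_le B
      have := Int.le_ceil ((n:ℝ)*(b-a))
      have := Int.lt_floor_add_one A
      linarith
    have h2 : ((⌊B⌋ : ℤ) : ℝ) < ((⌈(n:ℝ)*(b-a)⌉ + ⌊A⌋ + 1 : ℤ) : ℝ) := by push_cast; linarith
    have h3 := Int.cast_lt.mp h2
    omega
end
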